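/- (Conservation law of the −1 flow in SO(N+1).) Let N ≥ 2. Let v, h⊥ : ℝ → ℂ^{N−1} be differentiable row-vector-valued functions, h∥ : ℝ → ℝ differentiable, and 𝐡⊥ : ℝ → M_{N−1}(ℝ) differentiable with 𝐡⊥(x)ᵀ = −𝐡⊥(x) for all x. Suppose that for all x: (i) h⊥′ + i·h∥·v + v⌟𝐡⊥ = 0; (ii) 2i·h∥′ = h⊥·v̄ − v·h̄⊥; (iii) 2·𝐡⊥′ = v̄⊗h⊥ + v⊗h̄⊥ − h̄⊥⊗v − h⊥⊗v̄. Then the function x ↦ |h⊥(x)|² + h∥(x)² − (1/2)·tr(𝐡⊥(x)²) is constant on ℝ. (This is the conservation law 0 = D_x(|h⊥|² + h∥² + (1/2)|𝐡⊥|²) corresponding to the chiral wave map conservation law for the −1 flow in SO(N+1), used to derive the second complex vector sine-Gordon equation.) -/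

import Mathlib

open Matrix

noncomputable section

/-- Componentwise complex conjugate of a row vector. -/
def cvec {n : ℕ} (p : Fin n → ℂ) : Fin n → ℂ := fun j => starRingEnd ℂ (p j)

/-- Dot product p·q = Σ_j p_j q_j. -/
def dotv {n : ℕ} (p q : Fin n → ℂ) : ℂ := ∑ j, p j * q j

/-- Contraction (p⌟M)_k = Σ_j p_j M_{jk}. -/
def contr {n : ℕ} (p : Fin n → ℂ) (M : Matrix (Fin n) (Fin n) ℂ) : Fin n → ℂ :=
  fun k => ∑ j, p j * M j k

/-!
Differentiate the density along the flow. By (i), the part `i h∥ v` of `h⊥′` contributes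
`i h∥ (h⊥·v̄ − v·h̄⊥)` to `(|h⊥|²)′`, which (ii) cancels against `(h∥²)′`; the part `v⌟𝐡⊥`
contributes bilinear terms in `v, h⊥` that, by (iii) and the skew-symmetry of `𝐡⊥`, are exactly
`½ tr(𝐡⊥²)′ = tr(𝐡⊥′ 𝐡⊥)`. A function on `ℝ` with vanishing derivative is constant.
-/

open Complex

section Algebra

variable {ι R : Type*} [Fintype ι]

theorem dotProduct_vecMul_of_transpose_eq_neg [CommRing R] {M : Matrix ι ι R} (hM : Mᵀ = -M)
    (x y : ι → R) : x ⬝ᵥ (y ᵥ* M) = -(y ⬝ᵥ (x ᵥ* M)) := by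
  rw [← mulVec_transpose, hM, neg_mulVec, dotProduct_neg, dotProduct_mulVec, dotProduct_comm]

theorem star_vecMul_of_conjTranspose_eq_transpose [CommSemiring R] [StarRing R] {M : Matrix ι ι R}
    (hM : Mᴴ = Mᵀ) (v : ι → R) : star (v ᵥ* M) = star v ᵥ* M := by
  rw [star_vecMul, hM, mulVec_transpose]

theorem trace_vecMulVec_mul [CommSemiring R] (a b : ι → R) (M : Matrix ι ι R) :
    trace (vecMulVec a b * M) = a ⬝ᵥ (b ᵥ* M) := by
  rw [vecMulVec_mul, trace_vecMulVec]

end Algebra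

section Calculus

variable {𝕜 𝔸 ι : Type*} [NontriviallyNormedField 𝕜] [NormedCommRing 𝔸] [NormedAlgebra 𝕜 𝔸]
  [Fintype ι] {x : 𝕜}

theorem HasDerivAt.dotProduct {p q : 𝕜 → ι → 𝔸} {p' q' : ι → 𝔸}
    (hp : ∀ i, HasDerivAt (fun y => p y i) (p' i) x)
    (hq : ∀ i, HasDerivAt (fun y => q y i) (q' i) x) :
    HasDerivAt (fun y => p y ⬝ᵥ q y) (p' ⬝ᵥ q x + p x ⬝ᵥ q') x := by
  simp only [_root_.dotProduct, ← Finset.sum_add_distrib]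
  exact HasDerivAt.fun_sum fun i _ => (hp i).fun_mul (hq i)

theorem HasDerivAt.trace_mul {M N : 𝕜 → Matrix ι ι 𝔸} {M' N' : Matrix ι ι 𝔸}
    (hM : ∀ i j, HasDerivAt (fun y => M y i j) (M' i j) x)
    (hN : ∀ i j, HasDerivAt (fun y => N y i j) (N' i j) x) :
    HasDerivAt (fun y => trace (M y * N y)) (trace (M' * N x + M x * N')) x := by
  simp only [trace, diag, mul_apply, Matrix.add_apply, ← Finset.sum_add_distrib]
  exact HasDerivAt.fun_sum fun i _ => HasDerivAt.fun_sum fun j _ => (hM i j).fun_mul (hN j i)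

end Calculus

section Flow

variable {ι : Type*}

theorem map_ofReal_transpose_eq_neg {M : Matrix ι ι ℝ} (hM : Mᵀ = -M) :
    (M.map ofReal)ᵀ = -M.map ofReal := by
  rw [← transpose_map, hM, Matrix.map_neg _ ofReal_neg]

theorem conjTranspose_map_ofReal (M : Matrix ι ι ℝ) : (M.map ofReal)ᴴ = (M.map ofReal)ᵀ := by
  ext; simp

variable [Fintype ι]

def conservedDensity (h : ι → ℂ) (a : ℝ) (M : Matrix ι ι ℝ) : ℂ :=
  h ⬝ᵥ star h + (a : ℂ) ^ 2 - 1 / 2 * ((M * M).trace : ℂ)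

theorem conservedDensity_variation_eq_zero {M C : Matrix ι ι ℂ} (hskew : Mᵀ = -M) (hreal : Mᴴ = Mᵀ)
    {h v h' : ι → ℂ} {a a' : ℝ}
    (h1 : h' + (I * a) • v + v ᵥ* M = 0)
    (h2 : 2 * I * a' = h ⬝ᵥ star v - v ⬝ᵥ star h)
    (h3 : (2 : ℂ) • C = vecMulVec (star v) h + vecMulVec v (star h)
      - vecMulVec (star h) v - vecMulVec h (star v)) :
    h' ⬝ᵥ star h + h ⬝ᵥ star h' + 2 * a * a' - trace (C * M) = 0 := by
  have skew := dotProduct_vecMul_of_transpose_eq_neg hskew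
  have hh' : h' = -((I * a) • v) - v ᵥ* M := by linear_combination h1
  have hstar : star h' = (I * a) • star v - star v ᵥ* M := by
    rw [hh', star_sub, star_neg, star_smul, star_vecMul_of_conjTranspose_eq_transpose hreal]
    simp
  have htrace := congrArg (fun X => trace (X * M)) h3
  simp only [smul_mul, trace_smul, sub_mul, add_mul, trace_sub, trace_add, trace_vecMulVec_mul,
    smul_eq_mul] at htrace
  rw [hstar, hh']
  simp only [sub_dotProduct, neg_dotProduct, smul_dotProduct, dotProduct_sub, dotProduct_smul,
    smul_eq_mul]
  rw [skew (star h) v, skew h (star v)] at htrace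
  rw [dotProduct_comm (v ᵥ* M), skew (star h) v, skew h (star v)]
  linear_combination (-1 / 2 : ℂ) * htrace - I * a * h2 + 2 * a * a' * I_sq

theorem ofReal_trace_mul (A B : Matrix ι ι ℝ) :
    ((A * B).trace : ℂ) = (A.map ofReal * B.map ofReal).trace := by
  simp [trace, mul_apply]

theorem hasDerivAt_conservedDensity {h : ℝ → ι → ℂ} {a : ℝ → ℝ} {M : ℝ → Matrix ι ι ℝ}
    {h' : ι → ℂ} {a' : ℝ} {M' : Matrix ι ι ℝ} {x : ℝ}
    (hh : ∀ i, HasDerivAt (fun y => h y i) (h' i) x) (ha : HasDerivAt a a' x)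
    (hM : ∀ i j, HasDerivAt (fun y => M y i j) (M' i j) x) :
    HasDerivAt (fun y => conservedDensity (h y) (a y) (M y))
      (h' ⬝ᵥ star (h x) + h x ⬝ᵥ star h' + 2 * a x * a'
        - (M'.map ofReal * (M x).map ofReal).trace) x := by
  have hdot := HasDerivAt.dotProduct (q := fun y => star (h y)) (q' := star h') hh
    fun i => (hh i).star
  have hsq := ha.ofReal_comp.fun_pow 2
  have htr := (HasDerivAt.trace_mul hM hM).ofReal_comp.const_mul (1 / 2 : ℂ)
  refine ((hdot.add hsq).sub htr).congr_deriv ?_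
  rw [trace_add, trace_mul_comm (M x), ← ofReal_trace_mul]
  push_cast
  ring

end Flow

theorem statement18_general (n : ℕ)
    (v hp : ℝ → Fin n → ℂ) (hpar : ℝ → ℝ) (hm : ℝ → Matrix (Fin n) (Fin n) ℝ)
    (hdh : ∀ j, Differentiable ℝ fun x => hp x j)
    (hdpar : Differentiable ℝ hpar)
    (hdm : ∀ j k, Differentiable ℝ fun x => hm x j k)
    (hskew : ∀ x, (hm x)ᵀ = -(hm x))
    (heq1 : ∀ x j, deriv (fun y => hp y j) x + Complex.I * (hpar x : ℂ) * v x j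
        + contr (v x) ((hm x).map fun r => (r : ℂ)) j = 0)
    (heq2 : ∀ x, 2 * Complex.I * ((deriv hpar x : ℝ) : ℂ)
        = dotv (hp x) (cvec (v x)) - dotv (v x) (cvec (hp x)))
    (heq3 : ∀ x j k, 2 * ((deriv (fun y => hm y j k) x : ℝ) : ℂ)
        = starRingEnd ℂ (v x j) * hp x k + v x j * starRingEnd ℂ (hp x k)
          - starRingEnd ℂ (hp x j) * v x k - hp x j * starRingEnd ℂ (v x k)) :
    ∀ x y, dotv (hp x) (cvec (hp x)) + ((hpar x : ℂ)) ^ 2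
          - (1 / 2) * (((hm x * hm x).trace : ℝ) : ℂ)
        = dotv (hp y) (cvec (hp y)) + ((hpar y : ℂ)) ^ 2
          - (1 / 2) * (((hm y * hm y).trace : ℝ) : ℂ) := by
  have hconst : ∀ x, HasDerivAt (fun y => conservedDensity (hp y) (hpar y) (hm y)) 0 x := by
    intro x
    refine (hasDerivAt_conservedDensity (M' := of fun j k => deriv (fun y => hm y j k) x)
      (fun j => (hdh j x).hasDerivAt) (hdpar x).hasDerivAt
      (fun j k => (hdm j k x).hasDerivAt)).congr_deriv ?_
    refine conservedDensity_variation_eq_zero (v := v x) (map_ofReal_transpose_eq_neg (hskew x))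
      (conjTranspose_map_ofReal _) ?_ ?_ ?_
    · funext j
      simpa [contr, vecMul, dotProduct] using heq1 x j
    · simpa [dotv, cvec, dotProduct, Complex.star_def] using heq2 x
    · ext j k
      simpa [vecMulVec, Complex.star_def] using heq3 x j k
  intro x y
  exact is_const_of_deriv_eq_zero (fun z => (hconst z).differentiableAt)
    (fun z => (hconst z).deriv) x y

/-- conservation law of the −1 flow in SO(N+1):
under h⊥′ + i·h∥·v + v⌟𝐡⊥ = 0, 2i·h∥′ = h⊥·v̄ − v·h̄⊥ and
2·𝐡⊥′ = v̄⊗h⊥ + v⊗h̄⊥ − h̄⊥⊗v − h⊥⊗v̄ (with 𝐡⊥ real skew-symmetric),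
the quantity |h⊥|² + h∥² − (1/2)·tr(𝐡⊥²) is constant. -/
theorem statement18 (n : ℕ) (hn : 1 ≤ n)
    (v hp : ℝ → Fin n → ℂ) (hpar : ℝ → ℝ) (hm : ℝ → Matrix (Fin n) (Fin n) ℝ)
    (hdv : ∀ j, Differentiable ℝ fun x => v x j)
    (hdh : ∀ j, Differentiable ℝ fun x => hp x j)
    (hdpar : Differentiable ℝ hpar)
    (hdm : ∀ j k, Differentiable ℝ fun x => hm x j k)
    (hskew : ∀ x, (hm x)ᵀ = -(hm x))
    (heq1 : ∀ x j, deriv (fun y => hp y j) x + Complex.I * (hpar x : ℂ) * v x j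
        + contr (v x) ((hm x).map fun r => (r : ℂ)) j = 0)
    (heq2 : ∀ x, 2 * Complex.I * ((deriv hpar x : ℝ) : ℂ)
        = dotv (hp x) (cvec (v x)) - dotv (v x) (cvec (hp x)))
    (heq3 : ∀ x j k, 2 * ((deriv (fun y => hm y j k) x : ℝ) : ℂ)
        = starRingEnd ℂ (v x j) * hp x k + v x j * starRingEnd ℂ (hp x k)
          - starRingEnd ℂ (hp x j) * v x k - hp x j * starRingEnd ℂ (v x k)) :
    ∀ x y, dotv (hp x) (cvec (hp x)) + ((hpar x : ℂ)) ^ 2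
          - (1 / 2) * (((hm x * hm x).trace : ℝ) : ℂ)
        = dotv (hp y) (cvec (hp y)) + ((hpar y : ℂ)) ^ 2
          - (1 / 2) * (((hm y * hm y).trace : ℝ) : ℂ) :=
  statement18_general n v hp hpar hm hdh hdpar hdm hskew heq1 heq2 heq3
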